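/- Let d ≥ 1 be an integer, V a finite set of points in ℤ^d, and let s > 0, l > 0 and r ≥ 2 be real numbers with |V| > r^l·s. Let Ṽ ⊆ V be a nonempty (1/(3r^{1+l}))-approximation of V with respect to axis-parallel boxes. Let B be an axis-parallel box, and set V_1 = V ∩ B and Ṽ_1 = Ṽ ∩ B. If |Ṽ_1| ≥ (2/r^l)·|Ṽ|, then: (i) |V_1| > (5/(3r^l))·|V| > s; and (ii) Ṽ_1 is a (1/r)-approximation of V_1 with respect to axis-parallel boxes, i.e., for every axis-parallel box B', | |Ṽ_1 ∩ B'|/|Ṽ_1| − |V_1 ∩ B'|/|V_1| | ≤ 1/r. -/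

import Mathlib

/-!
Restricting to a box `B` conditions both relative counts on `B`: the relative count of a
sub-box `B'` in `Ṽ₁` is `|Ṽ ∩ B ∩ B'|/|Ṽ|` divided by `|Ṽ ∩ B|/|Ṽ|`, and likewise for `V₁`.
Since `B ∩ B'` is again a box, numerators and denominators are `ε`-close, and the
denominator for `Ṽ` is at least `c = 2/r^l`, so the quotients are `2ε/c = 1/(3r)`-close.
The same estimate for `B` itself shows `|V₁|/|V| ≥ 2/r^l - ε > 5/(3r^l)`.
-/

def IsBoxApprox (d : ℕ) (X X' : Finset (Fin d → ℤ)) (ε : ℝ) : Prop :=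
  ∀ lo hi : Fin d → ℤ,
    |((X'.filter fun v => ∀ j : Fin d, lo j ≤ v j ∧ v j ≤ hi j).card : ℝ) /
        (X'.card : ℝ) -
      ((X.filter fun v => ∀ j : Fin d, lo j ≤ v j ∧ v j ≤ hi j).card : ℝ) /
        (X.card : ℝ)| ≤ ε

lemma abs_div_sub_div_le_of_abs_sub_le {x y α β ε c : ℝ} (hc : 0 < c)
    (hxy : |x - y| ≤ ε) (hαβ : |α - β| ≤ ε) (hcα : c ≤ α) (hy : 0 ≤ y) (hyβ : y ≤ β) :
    |x / α - y / β| ≤ 2 * ε / c := by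
  have hα : 0 < α := hc.trans_le hcα
  have hε : 0 ≤ ε := (abs_nonneg _).trans hxy
  have hxα : |x - y| / α ≤ ε / c := div_le_div₀ hε hxy hc hcα
  rcases (hy.trans hyβ).eq_or_lt with hβ | hβ
  · -- here `y = 0` and `y / β = 0 / 0 = 0`
    obtain rfl : y = 0 := le_antisymm (hβ ▸ hyβ) hy
    calc |x / α - 0 / β| = |x - 0| / α := by simp [abs_div, abs_of_pos hα]
      _ ≤ ε / c := hxα
      _ ≤ 2 * ε / c := by gcongr; linarith
  have hyβ' : y / β ≤ 1 := (div_le_one hβ).2 hyβ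
  calc |x / α - y / β| = |(x - y) / α + y / β * ((β - α) / α)| := by
        congr 1; field_simp; ring
    _ ≤ |x - y| / α + y / β * (|α - β| / α) := by
        refine (abs_add_le _ _).trans (le_of_eq ?_)
        rw [abs_mul, abs_of_nonneg (div_nonneg hy hβ.le), abs_div, abs_div, abs_of_pos hα,
          abs_sub_comm β]
    _ ≤ ε / c + 1 * (ε / c) := by gcongr
    _ = 2 * ε / c := by ring

section Boxes

variable {d : ℕ}

def boxFilter (X : Finset (Fin d → ℤ)) (lo hi : Fin d → ℤ) : Finset (Fin d → ℤ) :=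
  X.filter fun v => ∀ j : Fin d, lo j ≤ v j ∧ v j ≤ hi j

noncomputable def boxFraction (X : Finset (Fin d → ℤ)) (lo hi : Fin d → ℤ) : ℝ :=
  ((boxFilter X lo hi).card : ℝ) / (X.card : ℝ)

lemma boxFilter_boxFilter (X : Finset (Fin d → ℤ)) (lo hi lo' hi' : Fin d → ℤ) :
    boxFilter (boxFilter X lo hi) lo' hi' = boxFilter X (lo ⊔ lo') (hi ⊓ hi') := by
  simp only [boxFilter, Finset.filter_filter, Pi.sup_apply, Pi.inf_apply, sup_le_iff,
    le_inf_iff]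
  refine Finset.filter_congr fun v _ => ⟨fun h j => ?_, fun h => ⟨fun j => ?_, fun j => ?_⟩⟩
  · exact ⟨⟨(h.1 j).1, (h.2 j).1⟩, (h.1 j).2, (h.2 j).2⟩
  · exact ⟨(h j).1.1, (h j).2.1⟩
  · exact ⟨(h j).1.2, (h j).2.2⟩

lemma boxFraction_boxFilter (X : Finset (Fin d → ℤ)) (lo hi lo' hi' : Fin d → ℤ) :
    boxFraction (boxFilter X lo hi) lo' hi' =
      boxFraction X (lo ⊔ lo') (hi ⊓ hi') / boxFraction X lo hi := by
  rcases X.eq_empty_or_nonempty with rfl | hX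
  · simp [boxFraction, boxFilter]
  have hX : (X.card : ℝ) ≠ 0 := by exact_mod_cast hX.card_pos.ne'
  rw [boxFraction, boxFraction, boxFraction, boxFilter_boxFilter,
    div_div_div_cancel_right₀ hX]

lemma boxFraction_inf_le (X : Finset (Fin d → ℤ)) (lo hi lo' hi' : Fin d → ℤ) :
    boxFraction X (lo ⊔ lo') (hi ⊓ hi') ≤ boxFraction X lo hi := by
  unfold boxFraction
  gcongr
  rw [← boxFilter_boxFilter]
  exact Finset.filter_subset _ _

lemma boxFraction_nonneg (X : Finset (Fin d → ℤ)) (lo hi : Fin d → ℤ) :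
    0 ≤ boxFraction X lo hi := by
  unfold boxFraction
  positivity

lemma isBoxApprox_iff {X X' : Finset (Fin d → ℤ)} {ε : ℝ} :
    IsBoxApprox d X X' ε ↔ ∀ lo hi, |boxFraction X' lo hi - boxFraction X lo hi| ≤ ε :=
  Iff.rfl

namespace IsBoxApprox

variable {X X' : Finset (Fin d → ℤ)} {ε : ℝ}

lemma mono {ε' : ℝ} (h : IsBoxApprox d X X' ε) (hε : ε ≤ ε') : IsBoxApprox d X X' ε' :=
  fun lo hi => (h lo hi).trans hε

lemma sub_le_boxFraction (h : IsBoxApprox d X X' ε) (lo hi : Fin d → ℤ) :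
    boxFraction X' lo hi - ε ≤ boxFraction X lo hi := by
  have := abs_le.1 (isBoxApprox_iff.1 h lo hi)
  linarith

lemma boxFilter {c : ℝ} (h : IsBoxApprox d X X' ε) (hc : 0 < c) {lo hi : Fin d → ℤ}
    (hcX' : c ≤ boxFraction X' lo hi) :
    IsBoxApprox d (boxFilter X lo hi) (boxFilter X' lo hi) (2 * ε / c) := by
  refine isBoxApprox_iff.2 fun lo' hi' => ?_
  rw [boxFraction_boxFilter, boxFraction_boxFilter]
  exact abs_div_sub_div_le_of_abs_sub_le hc (h _ _) (h lo hi) hcX'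
    (boxFraction_nonneg _ _ _) (boxFraction_inf_le _ _ _ _ _)

end IsBoxApprox

end Boxes

theorem nested_approximation_general (d : ℕ)
    (V W : Finset (Fin d → ℤ)) (s l r : ℝ)
    (hs : 0 < s) (hr : 2 ≤ r)
    (hVbig : r ^ l * s < (V.card : ℝ))
    (hWne : W.Nonempty)
    (happrox : IsBoxApprox d V W (1 / (3 * r ^ (1 + l))))
    (lo hi : Fin d → ℤ) :
    ((W.filter fun v => ∀ j : Fin d, lo j ≤ v j ∧ v j ≤ hi j).card : ℝ) ≥
        2 / r ^ l * (W.card : ℝ) →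
      (((V.filter fun v => ∀ j : Fin d, lo j ≤ v j ∧ v j ≤ hi j).card : ℝ) >
          5 / (3 * r ^ l) * (V.card : ℝ) ∧
        5 / (3 * r ^ l) * (V.card : ℝ) > s) ∧
      IsBoxApprox d (V.filter fun v => ∀ j : Fin d, lo j ≤ v j ∧ v j ≤ hi j)
        (W.filter fun v => ∀ j : Fin d, lo j ≤ v j ∧ v j ≤ hi j) (1 / r) := by
  intro hW₁
  have hr0 : 0 < r := by linarith
  have hR : 0 < r ^ l := Real.rpow_pos_of_pos hr0 l
  have hε : 1 / (3 * r ^ (1 + l)) = 1 / (3 * r) / r ^ l := by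
    rw [Real.rpow_add hr0, Real.rpow_one, div_div, mul_assoc]
  have hV : (0 : ℝ) < V.card := (mul_pos hR hs).trans hVbig
  have hW : 2 / r ^ l ≤ boxFraction W lo hi :=
    (le_div_iff₀ (by exact_mod_cast hWne.card_pos)).2 hW₁
  have hε' : 1 / (3 * r) / r ^ l ≤ 1 / (6 * r ^ l) := by
    rw [div_div, div_le_div_iff₀ (by positivity) (by positivity)]
    nlinarith
  have hV₁ : 11 / (6 * r ^ l) ≤ boxFraction V lo hi := by
    have h := happrox.sub_le_boxFraction lo hi
    have : 2 / r ^ l - 1 / (6 * r ^ l) = 11 / (6 * r ^ l) := by field_simp; norm_num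
    linarith
  refine ⟨⟨?_, ?_⟩, ?_⟩
  · calc 5 / (3 * r ^ l) * (V.card : ℝ) < 11 / (6 * r ^ l) * V.card := by
          refine mul_lt_mul_of_pos_right ?_ hV
          rw [div_lt_div_iff₀ (by positivity) (by positivity)]
          linarith
      _ ≤ _ := (le_div_iff₀ hV).1 hV₁
  · calc s < 5 / (3 * r ^ l) * (r ^ l * s) := by field_simp; linarith
      _ < 5 / (3 * r ^ l) * V.card := by gcongr
  · refine (happrox.boxFilter (by positivity) hW).mono ?_
    have : 2 * (1 / (3 * r) / r ^ l) / (2 / r ^ l) = 1 / (3 * r) := by field_simp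
    rw [hε, this]
    exact one_div_le_one_div_of_le hr0 (by linarith)

/-- Let `|V| > r^l·s` and let `Ṽ` be a `(1/(3r^{1+l}))`-approximation of
`V`. For an axis-parallel box `B`, set `V₁ = V ∩ B` and `Ṽ₁ = Ṽ ∩ B`. If
`|Ṽ₁| ≥ (2/r^l)·|Ṽ|`, then `|V₁| > (5/(3r^l))·|V| > s`, and `Ṽ₁` is a
`(1/r)`-approximation of `V₁`. -/
theorem nested_approximation (d : ℕ) (hd : 1 ≤ d)
    (V W : Finset (Fin d → ℤ)) (s l r : ℝ)
    (hs : 0 < s) (hl : 0 < l) (hr : 2 ≤ r)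
    (hVbig : r ^ l * s < (V.card : ℝ))
    (hWV : W ⊆ V) (hWne : W.Nonempty)
    (happrox : IsBoxApprox d V W (1 / (3 * r ^ (1 + l))))
    (lo hi : Fin d → ℤ) :
    ((W.filter fun v => ∀ j : Fin d, lo j ≤ v j ∧ v j ≤ hi j).card : ℝ) ≥
        2 / r ^ l * (W.card : ℝ) →
      (((V.filter fun v => ∀ j : Fin d, lo j ≤ v j ∧ v j ≤ hi j).card : ℝ) >
          5 / (3 * r ^ l) * (V.card : ℝ) ∧
        5 / (3 * r ^ l) * (V.card : ℝ) > s) ∧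
      IsBoxApprox d (V.filter fun v => ∀ j : Fin d, lo j ≤ v j ∧ v j ≤ hi j)
        (W.filter fun v => ∀ j : Fin d, lo j ≤ v j ∧ v j ≤ hi j) (1 / r) :=
  nested_approximation_general d V W s l r hs hr hVbig hWne happrox lo hi
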